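/- Let S_N = Σ over (e₁,e₂) ∈ N_0² with 3^{e₁}·5^{e₂} ≤ N of 3^{e₁}·5^{e₂}. Then S_N/(N·log N) → 1/(log 3·log 5) as N → ∞. -/

import Mathlib

noncomputable def S17 (N : ℕ) : ℝ :=
  ∑ p ∈ (Finset.range (N + 1) ×ˢ Finset.range (N + 1)).filter
      (fun p => 3 ^ p.1 * 5 ^ p.2 ≤ N),
    ((3 : ℝ) ^ p.1 * 5 ^ p.2)

/-!
Summing along the rows `b` with `5 ^ b ≤ N`, row `b` contributes `5 ^ b (3 ^ (A_b + 1) - 1) / 2`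
with `A_b = ⌊log₃ (N / 5 ^ b)⌋`, and `3 ^ A_b 5 ^ b = N · 3 ^ (-{x_N - b γ})` where
`x_N = log₃ N` and `γ = log₃ 5`. Hence `S_N ≈ (3 / 2) N ∑_{b ≤ log₅ N} g (x_N - b γ)` with
`g t = 3 ^ (-{t})`. As `γ` is irrational, Weyl's theorem says that the averages of a continuous
function along the rotation by `-γ` of `ℝ/ℤ` converge to its integral *uniformly in the starting
point* (it holds for characters, and trigonometric polynomials are dense). Sandwiching `g`, which
has a single jump, between continuous functions extends this to `g`, so the average of
`g (x_N - b γ)` tends to `∫₀¹ 3 ^ (-t) dt = 2 / (3 log 3)` even though `x_N` moves with `N`.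
With `log₅ N` rows this gives `S_N ~ (3 / 2) N (log N / log 5) · 2 / (3 log 3)`.
-/

open Filter Topology MeasureTheory Finset AddCircle Set Real

lemma norm_geom_sum_le_of_norm_eq_one {𝕜 : Type*} [NormedField 𝕜] {z : 𝕜} (hz₁ : ‖z‖ = 1)
    (hz : z ≠ 1) (k : ℕ) : ‖∑ j ∈ range k, z ^ j‖ ≤ 2 / ‖z - 1‖ := by
  rw [geom_sum_eq hz, norm_div]
  gcongr
  calc ‖z ^ k - 1‖ ≤ ‖z ^ k‖ + ‖(1 : 𝕜)‖ := norm_sub_le _ _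
    _ = 2 := by rw [norm_pow, hz₁, one_pow, norm_one]; norm_num

lemma tendstoUniformly_of_norm_le {ι α E : Type*} [SeminormedAddCommGroup E] {l : Filter ι}
    {F : ι → α → E} {u : ι → ℝ} (hF : ∀ i x, ‖F i x‖ ≤ u i) (hu : Tendsto u l (𝓝 0)) :
    TendstoUniformly F (fun _ => 0) l :=
  tendsto_prod_top_iff.1 <| squeeze_zero_norm (fun p => hF p.1 p.2) (hu.comp tendsto_fst)

lemma TendstoUniformly.tendsto_apply_comp {ι ι' α β : Type*} [UniformSpace β] {l : Filter ι}
    {l' : Filter ι'} {F : ι → α → β} {c : β} (hF : TendstoUniformly F (fun _ => c) l)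
    {i : ι' → ι} (hi : Tendsto i l' l) (x : ι' → α) :
    Tendsto (fun n => F (i n) (x n)) l' (𝓝 c) :=
  (tendsto_prod_top_iff.2 hF).comp (hi.prodMk tendsto_top)

section BirkhoffAverage

variable {α : Type*}

lemma birkhoffAverage_smul {𝕜 M : Type*} [Semifield 𝕜] [AddCommMonoid M] [Module 𝕜 M]
    (f : α → α) (c : 𝕜) (g : α → M) :
    birkhoffAverage 𝕜 f (c • g) = c • birkhoffAverage 𝕜 f g := by
  funext n x
  simp [birkhoffAverage, birkhoffSum, Finset.smul_sum, smul_comm c]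

lemma norm_birkhoffAverage_le {𝕜 E : Type*} [RCLike 𝕜] [SeminormedAddCommGroup E]
    [NormedSpace 𝕜 E] (f : α → α) {g : α → E} {C : ℝ} (hC : 0 ≤ C) (hg : ∀ x, ‖g x‖ ≤ C)
    (n : ℕ) (x : α) : ‖birkhoffAverage 𝕜 f g n x‖ ≤ C := by
  rcases n.eq_zero_or_pos with rfl | hn
  · simpa using hC
  calc ‖birkhoffAverage 𝕜 f g n x‖ ≤ (n : ℝ)⁻¹ * ∑ k ∈ range n, ‖g (f^[k] x)‖ := by
        rw [birkhoffAverage, norm_smul, norm_inv, RCLike.norm_natCast]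
        gcongr
        exact norm_sum_le _ _
    _ ≤ (n : ℝ)⁻¹ * ∑ _k ∈ range n, C := by gcongr; exact hg _
    _ = C := by simp [hn.ne']

lemma birkhoffAverage_mono {f : α → α} {g g' : α → ℝ} (h : g ≤ g') (n : ℕ) :
    birkhoffAverage ℝ f g n ≤ birkhoffAverage ℝ f g' n := fun x => by
  unfold birkhoffAverage birkhoffSum
  gcongr
  exact h _

end BirkhoffAverage

namespace AddCircle

variable {T : ℝ}

lemma fourier_add_nsmul (n : ℤ) (x δ : AddCircle T) (k : ℕ) :
    fourier n (x + k • δ) = fourier n x * fourier n δ ^ k := by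
  simp only [fourier_apply, smul_add, smul_comm n k, toCircle_add, toCircle_nsmul]
  push_cast; rfl

variable [Fact (0 < T)]

lemma fourier_ne_one_of_addOrderOf_eq_zero {δ : AddCircle T} (hδ : addOrderOf δ = 0) {n : ℤ}
    (hn : n ≠ 0) : fourier n δ ≠ 1 := by
  rw [fourier_apply, ne_eq, Circle.coe_eq_one, ← toCircle_zero (T := T),
    (injective_toCircle (Fact.out : 0 < T).ne').eq_iff]
  exact fun h => addOrderOf_eq_zero_iff.1 hδ (isOfFinAddOrder_iff_zsmul_eq_zero.2 ⟨n, hn, h⟩)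

lemma integral_fourier_of_ne_zero {n : ℤ} (hn : n ≠ 0) :
    ∫ x, fourier (T := T) n x ∂haarAddCircle = 0 :=
  integral_eq_zero_of_add_right_eq_neg (fourier_add_half_inv_index hn Fact.out)

lemma _root_.ContinuousMap.integrable_haarAddCircle {E : Type*} [NormedAddCommGroup E]
    (f : C(AddCircle T, E)) : Integrable f haarAddCircle :=
  f.continuous.integrable_of_hasCompactSupport (.of_compactSpace _)

lemma dist_integral_haarAddCircle_le_dist (f g : C(AddCircle T, ℂ)) :
    dist (∫ x, f x ∂haarAddCircle) (∫ x, g x ∂haarAddCircle) ≤ dist f g := by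
  rw [dist_eq_norm, ← integral_sub f.integrable_haarAddCircle g.integrable_haarAddCircle]
  simpa using norm_integral_le_of_norm_le_const (μ := haarAddCircle)
    (Eventually.of_forall fun x => (dist_eq_norm (f x) (g x)).symm.trans_le
      (ContinuousMap.dist_apply_le_dist x))

theorem tendstoUniformly_birkhoffAverage_fourier {δ : AddCircle T} (hδ : addOrderOf δ = 0)
    (n : ℤ) :
    TendstoUniformly (birkhoffAverage ℂ (· + δ) (fourier n))
      (fun _ => ∫ x, fourier (T := T) n x ∂haarAddCircle) atTop := by
  rcases eq_or_ne n 0 with rfl | hn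
  · have h1 : ⇑(fourier (T := T) 0) = fun _ => 1 := funext fun _ => fourier_zero
    refine (tendstoUniformly_congr ((eventually_ne_atTop 0).mono fun k hk =>
      birkhoffAverage_of_comp_eq ℂ (by rw [h1]; rfl) (Nat.cast_ne_zero.2 hk))).2 ?_
    simpa [h1] using tendsto_const_nhds.tendstoUniformly_const (g := fun _ : ℕ => (1 : ℂ))
      (p := atTop) (α := AddCircle T)
  set z := fourier n δ
  have hz : (z : ℂ) ≠ 1 := fourier_ne_one_of_addOrderOf_eq_zero hδ hn
  rw [integral_fourier_of_ne_zero hn]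
  refine tendstoUniformly_of_norm_le (u := fun k : ℕ => 2 / ‖(z : ℂ) - 1‖ / k) (fun k x => ?_)
    (tendsto_const_nhds.div_atTop tendsto_natCast_atTop_atTop)
  have hsum : birkhoffSum (· + δ) (fourier n) k x = fourier n x * ∑ j ∈ range k, (z : ℂ) ^ j := by
    simp only [birkhoffSum, add_right_iterate_apply, fourier_add_nsmul, Finset.mul_sum, z]
  rw [birkhoffAverage, hsum, norm_smul, norm_mul, norm_inv, RCLike.norm_natCast, fourier_apply,
    Circle.norm_coe, one_mul, div_eq_inv_mul _ (k : ℝ)]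
  gcongr
  exact norm_geom_sum_le_of_norm_eq_one (Circle.norm_coe _) hz k

lemma isClosed_setOf_tendstoUniformly_birkhoffAverage_add (δ : AddCircle T) :
    IsClosed {f : C(AddCircle T, ℂ) | TendstoUniformly (birkhoffAverage ℂ (· + δ) f)
      (fun _ => ∫ x, f x ∂haarAddCircle) atTop} := by
  refine isClosed_of_closure_subset fun f hf => Metric.tendstoUniformly_iff.2 fun ε hε => ?_
  obtain ⟨g, hg, hfg⟩ := Metric.mem_closure_iff.1 hf (ε / 3) (by positivity)
  filter_upwards [Metric.tendstoUniformly_iff.1 hg (ε / 3) (by positivity)] with n hn x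
  have havg : dist (birkhoffAverage ℂ (· + δ) g n x) (birkhoffAverage ℂ (· + δ) f n x)
      ≤ dist f g := by
    rw [dist_eq_norm, ← Pi.sub_apply, ← Pi.sub_apply (birkhoffAverage ℂ (· + δ) g),
      ← birkhoffAverage_sub]
    refine norm_birkhoffAverage_le _ dist_nonneg (fun y => ?_) n x
    rw [Pi.sub_apply, ← dist_eq_norm, dist_comm]
    exact ContinuousMap.dist_apply_le_dist y
  calc dist (∫ x, f x ∂haarAddCircle) (birkhoffAverage ℂ (· + δ) f n x)
      ≤ dist (∫ x, f x ∂haarAddCircle) (∫ x, g x ∂haarAddCircle)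
        + dist (∫ x, g x ∂haarAddCircle) (birkhoffAverage ℂ (· + δ) g n x)
        + dist (birkhoffAverage ℂ (· + δ) g n x) (birkhoffAverage ℂ (· + δ) f n x) :=
        dist_triangle4 _ _ _ _
    _ < ε / 3 + ε / 3 + ε / 3 := by
        gcongr
        · exact (dist_integral_haarAddCircle_le_dist f g).trans_lt hfg
        · exact hn x
        · exact havg.trans_lt hfg
    _ = ε := by ring

/-- Weyl's equidistribution theorem. -/
theorem tendstoUniformly_birkhoffAverage_add {δ : AddCircle T} (hδ : addOrderOf δ = 0)
    (f : C(AddCircle T, ℂ)) :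
    TendstoUniformly (birkhoffAverage ℂ (· + δ) f)
      (fun _ => ∫ x, f x ∂haarAddCircle) atTop := by
  let S : Submodule ℂ C(AddCircle T, ℂ) :=
    { carrier := {f | TendstoUniformly (birkhoffAverage ℂ (· + δ) f)
        (fun _ => ∫ x, f x ∂haarAddCircle) atTop}
      add_mem' := fun {f g} hf hg => by
        change TendstoUniformly _ _ _
        rw [ContinuousMap.coe_add, birkhoffAverage_add]
        convert hf.add hg using 1
        ext; simp [integral_add f.integrable_haarAddCircle g.integrable_haarAddCircle]
      zero_mem' := Metric.tendstoUniformly_iff.2 fun ε hε => by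
        simp [birkhoffAverage, birkhoffSum, hε]
      smul_mem' := fun c f hf => by
        change TendstoUniformly _ _ _
        rw [ContinuousMap.coe_smul, birkhoffAverage_smul]
        convert (uniformContinuous_const_smul c).comp_tendstoUniformly hf using 1 <;>
          ext <;> simp [integral_const_mul] }
  have hspan : Submodule.span ℂ (Set.range (fourier (T := T))) ≤ S :=
    Submodule.span_le.2 <| Set.range_subset_iff.2 (tendstoUniformly_birkhoffAverage_fourier hδ)
  have := Submodule.topologicalClosure_minimal _ hspan
    (isClosed_setOf_tendstoUniformly_birkhoffAverage_add δ)
  rw [span_fourier_closure_eq_top] at this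
  exact this Submodule.mem_top

theorem tendstoUniformly_birkhoffAverage_add_real {δ : AddCircle T} (hδ : addOrderOf δ = 0)
    (u : C(AddCircle T, ℝ)) :
    TendstoUniformly (birkhoffAverage ℝ (· + δ) u)
      (fun _ => ∫ x, u x ∂haarAddCircle) atTop := by
  have := Complex.reCLM.uniformContinuous.comp_tendstoUniformly
    (tendstoUniformly_birkhoffAverage_add hδ ((⟨_, Complex.continuous_ofReal⟩ : C(ℝ, ℂ)).comp u))
  convert this using 1
  · ext n x
    exact (map_birkhoffAverage ℂ ℝ Complex.reAddGroupHom (· + δ) (fun x => (u x : ℂ)) n x).symm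
  · ext
    simp [integral_complex_ofReal]

theorem tendstoUniformly_birkhoffAverage_add_of_sandwich {δ : AddCircle T}
    (hδ : addOrderOf δ = 0) {g : AddCircle T → ℝ} {c : ℝ}
    (h : ∀ ε > 0, ∃ l u : C(AddCircle T, ℝ), ⇑l ≤ g ∧ g ≤ ⇑u ∧
      c - ε ≤ ∫ x, l x ∂haarAddCircle ∧ ∫ x, u x ∂haarAddCircle ≤ c + ε) :
    TendstoUniformly (birkhoffAverage ℝ (· + δ) g) (fun _ => c) atTop := by
  refine Metric.tendstoUniformly_iff.2 fun ε hε => ?_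
  obtain ⟨l, u, hlg, hgu, hl, hu⟩ := h (ε / 2) (by positivity)
  filter_upwards
    [Metric.tendstoUniformly_iff.1 (tendstoUniformly_birkhoffAverage_add_real hδ l) _ (half_pos hε),
    Metric.tendstoUniformly_iff.1 (tendstoUniformly_birkhoffAverage_add_real hδ u) _ (half_pos hε)]
    with n hln hun x
  have hlow := birkhoffAverage_mono (f := (· + δ)) hlg n x
  have hup := birkhoffAverage_mono (f := (· + δ)) hgu n x
  specialize hln x
  specialize hun x
  rw [Real.dist_eq, abs_lt] at hln hun ⊢
  constructor <;> linarith

end AddCircle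

lemma liftIco_one_zero_coe {M : Type*} (F : ℝ → M) (t : ℝ) :
    liftIco 1 0 F t = F (Int.fract t) := by
  simp [liftIco]

lemma liftIco_one_zero_mono {F G : ℝ → ℝ} (h : ∀ t ∈ Ico (0 : ℝ) 1, F t ≤ G t) :
    liftIco 1 0 F ≤ liftIco 1 0 G :=
  fun q => h _ (by simpa using (equivIco 1 0 q).2)

lemma birkhoffSum_add_coe_liftIco {M : Type*} [AddCommMonoid M] (F : ℝ → M) (a x : ℝ) (n : ℕ) :
    birkhoffSum (· + (a : UnitAddCircle)) (liftIco 1 0 F) n x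
      = ∑ k ∈ range n, F (Int.fract (x + k * a)) := by
  refine sum_congr rfl fun k _ => ?_
  rw [add_right_iterate_apply, ← AddCircle.coe_nsmul, ← AddCircle.coe_add, nsmul_eq_mul,
    liftIco_one_zero_coe]

lemma integral_liftIco_haarAddCircle {F : ℝ → ℝ} (hF : F 0 = F 1) :
    ∫ x, liftIco 1 0 F x ∂haarAddCircle = ∫ t in (0 : ℝ)..1, F t := by
  have hvol : (volume : Measure UnitAddCircle) = haarAddCircle := by
    simp [volume_eq_smul_haarAddCircle]
  rw [← hvol, ← liftIoc_eq_liftIco (by rwa [zero_add]), integral_liftIoc_eq_intervalIntegral,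
    zero_add]

lemma integral_add_mul_pow {F : ℝ → ℝ} (hF : ContinuousOn F (Icc 0 1)) (c : ℝ) (k : ℕ) :
    ∫ t in (0 : ℝ)..1, (F t + c * t ^ k) = (∫ t in (0 : ℝ)..1, F t) + c / (k + 1) := by
  rw [intervalIntegral.integral_add (hF.intervalIntegrable_of_Icc zero_le_one)
    ((by fun_prop : Continuous _).intervalIntegrable _ _), intervalIntegral.integral_const_mul,
    integral_pow]
  simp [div_eq_mul_inv]

lemma integral_sub_mul_one_sub_pow {F : ℝ → ℝ} (hF : ContinuousOn F (Icc 0 1)) (c : ℝ) (k : ℕ) :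
    ∫ t in (0 : ℝ)..1, (F t - c * (1 - t) ^ k) = (∫ t in (0 : ℝ)..1, F t) - c / (k + 1) := by
  rw [intervalIntegral.integral_sub (hF.intervalIntegrable_of_Icc zero_le_one)
    ((by fun_prop : Continuous _).intervalIntegrable _ _), intervalIntegral.integral_const_mul,
    intervalIntegral.integral_comp_sub_left (fun t => t ^ k), integral_pow]
  simp [div_eq_mul_inv]

theorem tendstoUniformly_birkhoffAverage_add_liftIco {δ : UnitAddCircle} (hδ : addOrderOf δ = 0)
    {F : ℝ → ℝ} (hF : ContinuousOn F (Icc 0 1)) (hF₁₀ : F 1 ≤ F 0) :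
    TendstoUniformly (birkhoffAverage ℝ (· + δ) (liftIco 1 0 F))
      (fun _ => ∫ t in (0 : ℝ)..1, F t) atTop := by
  refine tendstoUniformly_birkhoffAverage_add_of_sandwich hδ fun ε hε => ?_
  set c := F 0 - F 1
  have hc : 0 ≤ c := sub_nonneg.2 hF₁₀
  obtain ⟨k, hk⟩ := exists_nat_gt (c / ε)
  have hck : c / (k + 1 + 1) ≤ ε := by
    rw [div_lt_iff₀ hε] at hk
    rw [div_le_iff₀ (by positivity)]
    nlinarith
  -- Adding `c t ^ (k + 1)`, resp. subtracting `c (1 - t) ^ (k + 1)`, cancels the jump of `F` at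
  -- `1 ≡ 0` while changing the integral by only `c / (k + 2)`.
  set U : ℝ → ℝ := fun t => F t + c * t ^ (k + 1)
  set L : ℝ → ℝ := fun t => F t - c * (1 - t) ^ (k + 1)
  have hU : U 0 = U 1 := by simp [U, c]
  have hL : L 0 = L 1 := by simp [L, c]
  refine ⟨⟨liftIco 1 0 L, liftIco_zero_continuous hL (hF.sub (by fun_prop))⟩,
    ⟨liftIco 1 0 U, liftIco_zero_continuous hU (hF.add (by fun_prop))⟩, ?_, ?_, ?_, ?_⟩
  · refine liftIco_one_zero_mono (F := L) (G := F) fun t ht => ?_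
    have : 0 ≤ c * (1 - t) ^ (k + 1) := mul_nonneg hc (pow_nonneg (by linarith [ht.2]) _)
    linarith
  · refine liftIco_one_zero_mono (F := F) (G := U) fun t ht => ?_
    have : 0 ≤ c * t ^ (k + 1) := mul_nonneg hc (pow_nonneg ht.1 _)
    linarith
  · change _ ≤ ∫ x, liftIco 1 0 L x ∂haarAddCircle
    rw [integral_liftIco_haarAddCircle hL, integral_sub_mul_one_sub_pow hF]
    push_cast
    linarith
  · change ∫ x, liftIco 1 0 U x ∂haarAddCircle ≤ _
    rw [integral_liftIco_haarAddCircle hU, integral_add_mul_pow hF]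
    push_cast
    linarith

lemma addOrderOf_coe_eq_zero_of_irrational {a : ℝ} (ha : Irrational a) :
    addOrderOf (a : UnitAddCircle) = 0 :=
  denseRange_zsmul_iff.1 <| denseRange_zsmul_coe_iff.2 <| by simpa using ha

section Logarithms

lemma irrational_logb_of_coprime {a b : ℕ} (ha : 1 < a) (hb : 1 < b) (hab : a.Coprime b) :
    Irrational (logb a b) := by
  rintro ⟨q, hq⟩
  have hq_pos : 0 < q := by
    have : 0 < logb a b := logb_pos (by exact_mod_cast ha) (by exact_mod_cast hb)
    exact_mod_cast hq ▸ this
  obtain ⟨m, hm⟩ : ∃ m : ℕ, q.num = m :=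
    ⟨q.num.toNat, (Int.toNat_of_nonneg (Rat.num_nonneg.2 hq_pos.le)).symm⟩
  have hm0 : m ≠ 0 := by
    rintro rfl; exact (Rat.num_pos.2 hq_pos).ne' hm
  have hpow : a ^ m = b ^ q.den := by
    have h1 : (a : ℝ) ^ (q : ℝ) = b := by
      rw [hq, rpow_logb (by positivity) (by exact_mod_cast ha.ne') (by positivity)]
    have h2 : ((a : ℝ) ^ (q : ℝ)) ^ (q.den : ℝ) = (a : ℝ) ^ (m : ℝ) := by
      rw [← rpow_mul (by positivity)]
      congr 1
      rw [← Rat.cast_natCast, ← Rat.cast_mul, Rat.mul_den_eq_num, hm]; simp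
    rw [h1, rpow_natCast, rpow_natCast] at h2
    exact_mod_cast h2.symm
  have : a ^ m = 1 := Nat.Coprime.eq_one_of_dvd (Nat.Coprime.pow m q.den hab) (hpow ▸ dvd_rfl)
  rw [Nat.pow_eq_one] at this
  omega

lemma integral_rpow_neg {b : ℝ} (hb : 0 < b) (hb₁ : b ≠ 1) :
    ∫ t in (0 : ℝ)..1, b ^ (-t) = (1 - b⁻¹) / log b := by
  have hlog : log b ≠ 0 := log_ne_zero_of_pos_of_ne_one hb hb₁
  rw [intervalIntegral.integral_eq_sub_of_hasDerivAt (f := fun t => -b ^ (-t) / log b)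
    (f' := fun t => b ^ (-t)) (fun t _ => ?_)
    (Continuous.intervalIntegrable (continuous_const_rpow hb.ne' |>.comp continuous_neg :) _ _)]
  · simp [rpow_neg_one]
    ring
  · exact (((hasDerivAt_neg t).const_rpow hb).neg.div_const (log b)).congr_deriv (by field_simp)

variable {b : ℝ}

lemma pow_le_iff_le_natFloor_logb (hb : 1 < b) {y : ℝ} (hy : 1 ≤ y) (n : ℕ) :
    b ^ n ≤ y ↔ n ≤ ⌊logb b y⌋₊ := by
  rw [Nat.le_floor_iff (logb_nonneg hb hy), le_logb_iff_rpow_le hb (by linarith), rpow_natCast]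

lemma pow_natFloor_logb (hb : 1 < b) {y : ℝ} (hy : 1 ≤ y) :
    b ^ ⌊logb b y⌋₊ = y * b ^ (-Int.fract (logb b y)) := by
  have hfloor : (⌊logb b y⌋₊ : ℝ) = logb b y + -Int.fract (logb b y) := by
    rw [natCast_floor_eq_intCast_floor (logb_nonneg hb hy), ← Int.self_sub_fract, sub_eq_add_neg]
  rw [← rpow_natCast, hfloor, rpow_add (by linarith), rpow_logb (by linarith) hb.ne' (by linarith)]

lemma geom_sum_natFloor_logb_le (hb : 1 < b) {y : ℝ} (hy : 1 ≤ y) :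
    ∑ k ∈ range (⌊logb b y⌋₊ + 1), b ^ k ≤ b / (b - 1) * y := by
  have hpow := (pow_le_iff_le_natFloor_logb hb hy _).2 le_rfl
  rw [geom_sum_eq hb.ne', pow_succ, div_mul_eq_mul_div, div_le_div_iff_of_pos_right (by linarith)]
  nlinarith

lemma tendsto_natFloor_logb_add_one_div_log (hb : 1 < b) :
    Tendsto (fun x => ((⌊logb b x⌋₊ + 1 : ℕ) : ℝ) / log x) atTop (𝓝 (log b)⁻¹) := by
  have hy : Tendsto (fun y : ℝ => ((⌊y⌋₊ + 1 : ℕ) : ℝ) / y) atTop (𝓝 1) := by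
    have := (tendsto_nat_floor_div_atTop (R := ℝ)).add tendsto_inv_atTop_zero
    rw [add_zero] at this
    refine this.congr' ((eventually_gt_atTop 0).mono fun y hy => ?_)
    push_cast; field_simp
  have hlog : 0 < log b := log_pos hb
  have := (hy.comp (tendsto_logb_atTop hb)).div_const (log b)
  rw [one_div] at this
  refine this.congr' ((eventually_gt_atTop 1).mono fun x hx => ?_)
  simp only [Function.comp_apply, logb]
  field_simp

lemma tendsto_geom_sum_natFloor_logb_div (hb : 1 < b) :
    Tendsto (fun x => (∑ k ∈ range (⌊logb b x⌋₊ + 1), b ^ k) / (x * log x)) atTop (𝓝 0) := by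
  have hlim : Tendsto (fun x => b / (b - 1) * (log x)⁻¹) atTop (𝓝 0) := by
    simpa using (tendsto_inv_atTop_zero.comp tendsto_log_atTop).const_mul (b / (b - 1))
  refine squeeze_zero' ?_ ?_ hlim
  · filter_upwards [eventually_ge_atTop 1] with x hx
    have := log_nonneg hx
    positivity
  · filter_upwards [eventually_gt_atTop 1] with x hx
    have hlog := log_pos hx
    rw [div_le_iff₀ (by positivity)]
    calc _ ≤ b / (b - 1) * x := geom_sum_natFloor_logb_le hb hx.le
      _ = _ := by field_simp

end Logarithms

lemma S17_eq_sum_rows {N : ℕ} (hN : 1 ≤ N) :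
    S17 N = ∑ b ∈ range (⌊logb 5 N⌋₊ + 1),
      ∑ a ∈ range (⌊logb 3 (N / 5 ^ b)⌋₊ + 1), (3 : ℝ) ^ a * 5 ^ b := by
  rw [S17]
  refine sum_finset_product_right' (f := fun a b => (3 : ℝ) ^ a * 5 ^ b) _ _ _ ?_
  rintro ⟨a, b⟩
  have hN' : (1 : ℝ) ≤ N := by exact_mod_cast hN
  have key : 3 ^ a * 5 ^ b ≤ N ↔ (5 : ℝ) ^ b ≤ N ∧ (3 : ℝ) ^ a ≤ N / 5 ^ b := by
    rw [le_div_iff₀ (by positivity), ← Nat.cast_le (α := ℝ)]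
    push_cast
    exact ⟨fun h => ⟨(le_mul_of_one_le_left (by positivity) (one_le_pow₀ (by norm_num))).trans h,
      h⟩, And.right⟩
  simp only [mem_filter, mem_product, Finset.mem_range, Nat.lt_succ_iff, key]
  constructor
  · rintro ⟨-, h5, h3⟩
    have hy : 1 ≤ (N : ℝ) / 5 ^ b := (one_le_div (by positivity)).2 h5
    exact ⟨(pow_le_iff_le_natFloor_logb (by norm_num) hN' b).1 h5,
      (pow_le_iff_le_natFloor_logb (by norm_num) hy a).1 h3⟩
  · rintro ⟨hb, ha⟩
    have h5 := (pow_le_iff_le_natFloor_logb (by norm_num) hN' b).2 hb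
    have hy : 1 ≤ (N : ℝ) / 5 ^ b := (one_le_div (by positivity)).2 h5
    have h3 := (pow_le_iff_le_natFloor_logb (by norm_num) hy a).2 ha
    have h := key.2 ⟨h5, h3⟩
    refine ⟨⟨?_, ?_⟩, h5, h3⟩
    · exact (Nat.lt_pow_self (by norm_num : 1 < 3)).le.trans
        ((Nat.le_mul_of_pos_right _ (by positivity)).trans h)
    · exact (Nat.lt_pow_self (by norm_num : 1 < 5)).le.trans
        ((Nat.le_mul_of_pos_left _ (by positivity)).trans h)

lemma S17_row_eq {N b : ℕ} (h : (5 : ℝ) ^ b ≤ N) :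
    ∑ a ∈ range (⌊logb 3 (N / 5 ^ b)⌋₊ + 1), (3 : ℝ) ^ a * 5 ^ b
      = 3 / 2 * N * 3 ^ (-Int.fract (logb 3 N + b * -logb 3 5)) - 5 ^ b / 2 := by
  have hy : 1 ≤ (N : ℝ) / 5 ^ b := (one_le_div (by positivity)).2 h
  have hlogb : logb 3 (N / 5 ^ b) = logb 3 N + b * -logb 3 5 := by
    rw [logb_div ((pow_pos (by norm_num) b).trans_le h).ne' (by positivity), logb_pow]; ring
  rw [← sum_mul, geom_sum_eq (by norm_num), pow_succ, pow_natFloor_logb (by norm_num) hy, hlogb]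
  field_simp
  ring

lemma S17_eq {N : ℕ} (hN : 1 ≤ N) :
    S17 N = 3 / 2 * N * birkhoffSum (· + ((-logb 3 5 : ℝ) : UnitAddCircle))
        (liftIco 1 0 fun t => (3 : ℝ) ^ (-t)) (⌊logb 5 N⌋₊ + 1) (logb 3 N)
      - 1 / 2 * ∑ b ∈ range (⌊logb 5 N⌋₊ + 1), (5 : ℝ) ^ b := by
  have hN' : (1 : ℝ) ≤ N := by exact_mod_cast hN
  rw [S17_eq_sum_rows hN, birkhoffSum_add_coe_liftIco, mul_sum, mul_sum, ← sum_sub_distrib]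
  refine sum_congr rfl fun b hb => ?_
  rw [S17_row_eq ((pow_le_iff_le_natFloor_logb (by norm_num) hN' b).2
    (Nat.lt_succ_iff.1 (Finset.mem_range.1 hb)))]
  ring

theorem weighted_lattice_sum_asymptotic :
    Filter.Tendsto (fun N : ℕ => S17 N / ((N : ℝ) * Real.log N))
      Filter.atTop (nhds (1 / (Real.log 3 * Real.log 5))) := by
  set δ : UnitAddCircle := ((-logb 3 5 : ℝ) : UnitAddCircle)
  set B : ℕ → ℕ := fun N => ⌊logb 5 N⌋₊ + 1
  have hδ : addOrderOf δ = 0 := addOrderOf_coe_eq_zero_of_irrational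
    (irrational_logb_of_coprime (by norm_num) (by norm_num) (by norm_num : Nat.Coprime 3 5)).neg
  have hB : Tendsto B atTop atTop := (tendsto_add_atTop_nat 1).comp <|
    tendsto_nat_floor_atTop.comp <|
      (tendsto_logb_atTop (by norm_num)).comp tendsto_natCast_atTop_atTop
  have hunif := tendstoUniformly_birkhoffAverage_add_liftIco hδ (F := fun t => (3 : ℝ) ^ (-t))
    ((continuous_const_rpow (by norm_num)).comp continuous_neg).continuousOn (by norm_num)
  rw [integral_rpow_neg (by norm_num) (by norm_num)] at hunif
  have havg := hunif.tendsto_apply_comp hB fun N => ((logb 3 N : ℝ) : UnitAddCircle)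
  have hcount := (tendsto_natFloor_logb_add_one_div_log (b := 5) (by norm_num)).comp
    tendsto_natCast_atTop_atTop
  have hgeom := (tendsto_geom_sum_natFloor_logb_div (b := 5) (by norm_num)).comp
    tendsto_natCast_atTop_atTop
  convert (((hcount.const_mul (3 / 2)).mul havg).sub (hgeom.const_mul (1 / 2))).congr' ?_ using 2
  · field_simp; ring
  · filter_upwards [eventually_ge_atTop 2] with N hN
    rw [S17_eq (by omega)]
    simp only [Function.comp_apply, birkhoffAverage, smul_eq_mul, B]
    field_simp
    ring
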